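/- arXiv:1804.05011 — 3 statements merged into one kernel-verified Lean document; each statement's English description precedes it below -/
import Mathlib

section
/- Initial Tayloring bound for optimization (Theorem 1, two-policy case): Let d ≥ 1, α ∈ (0,1), β ∈ (0,1], Γ > 0, q ∈ ℕ, and real numbers 𝔧₁, 𝔧₂ ≥ 1. For each x ∈ ℤ^d let 𝒰(x) be a nonempty countable set of actions, and for each u ∈ 𝒰(x) let P^u(x,·) be a probability distribution on ℤ^d whose drift μ_u(x) and diffusion matrix σ²_u(x) are given by absolutely convergent series, and let r(x,u) ∈ ℝ. Let U*, Û* : ℤ^d → (actions) be stationary policies with U*(x), Û*(x) ∈ 𝒰(x) for all x, and let Q_{U*}(x,y) := P^{U*(x)}(x,y) and Q_{Û*}(x,y) := P^{Û*(x)}(x,y) be the induced stochastic matrices; assume Q_{U*} has jumps bounded by 𝔧₁ and Q_{Û*} has jumps bounded by 𝔧₂. Assume: (a) |r(x,U*(x))|, |r(x,Û*(x))| ≤ Γ(1+‖x‖^q) for all x; (b) V* : ℤ^d → ℝ satisfies |V*(x)| ≤ Γ(1+‖x‖^q), for every x and u ∈ 𝒰(x) the series Σ_y P^u(x,y)V*(y)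 converges absolutely, the set {r(x,u) + α Σ_y P^u(x,y)V*(y) : u ∈ 𝒰(x)} is bounded above with supremum V*(x), and this supremum is attained at u = U*(x); (c) V̂ : ℝ^d → ℝ is twice continuously differentiable with |V̂(x)| ≤ Γ(1+‖x‖^q) for all x ∈ ℝ^d, and for every x ∈ ℤ^d the set {r(x,u) + α(μ_u(x)·DV̂(x) + (1/2)·trace(σ²_u(x)·D²V̂(x))) : u ∈ 𝒰(x)} is bounded above with supremum (1−α)V̂(x), attained at u = Û*(x); (d) V_{Û*}(x) := E_x^{Û*}[Σ_{t=0}^∞ α^t r(X_t, Û*(X_t))] converges absolutely, where E_x^{Û*} is the expectation for the Markov chain with transition matrix Q_{Û*} started at x, and similarly E_x^{U*} is for Q_{U*}. Then for every x ∈ ℤ^d, max(|V̂(x) − V*(x)|, |V_{Û*}(x) − V*(x)|) ≤ (max(𝔧₁,𝔧₂))^{2+β} · ( E_x^{Û*}[Σ_{t=0}^∞ α^t [D²V̂]_{β, B̄(X_t,𝔧₂)}] + E_x^{U*}[Σ_{t=0}^∞ α^t [D²V̂]_{β, B̄(X_t,𝔧₁)}] ), the right-hand side interpreted in [0,+∞].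 -/
/-!
Write `D = V̂ - V*` on `ℤ^d`. Because `V̂` solves the Taylored equation with maximiser `Û*` while
`V*` is only a supersolution of the Bellman equation for the action `Û*`, along `Q_{Û*}` one gets
`D ≤ α Q D + α e`, where `e` is the gap between the Taylored generator and `Q V̂ - V̂`. A
second-order Taylor expansion with Hölder remainder bounds `|e|` at `z` by
`[D²V̂]_{β, B̄(z, 𝔧)} 𝔧^{2+β} / 2`. Iterating the inequality along the chain, the term
`α^T E[D(X_T)]` vanishes because jumps are bounded, so `X_T` stays within distance `T 𝔧` of `x`
and `D` grows polynomially. The roles of the two equations swap along `Q_{U*}`, which bounds `-D`,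
and the same iteration, now an equality, compares `V_{Û*}` with `V̂`.
-/

open scoped ENNReal BigOperators

noncomputable section

/-- `ℤ^d` represented as functions `Fin d → ℤ`. -/
abbrev Zd (d : ℕ) := Fin d → ℤ

/-- The embedding of `ℤ^d` into Euclidean `ℝ^d`. -/
def zToR {d : ℕ} (x : Zd d) : EuclideanSpace ℝ (Fin d) := WithLp.toLp 2 (fun i => (x i : ℝ))

/-- `t`-step transition probabilities of the Markov chain with one-step
transition matrix `P`. -/
def mstep {d : ℕ} (P : Zd d → Zd d → ℝ) : ℕ → Zd d → Zd d → ℝ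
  | 0 => fun x y => if y = x then 1 else 0
  | n + 1 => fun x y => ∑' z : Zd d, mstep P n x z * P z y

/-- Entry `(i, j)` of the Hessian of `f` at `x`. -/
def hessianEntry {d : ℕ} (f : EuclideanSpace ℝ (Fin d) → ℝ)
    (x : EuclideanSpace ℝ (Fin d)) (i j : Fin d) : ℝ :=
  iteratedFDeriv ℝ 2 f x ![EuclideanSpace.single i 1, EuclideanSpace.single j 1]

/-- The Hölder seminorm `[D²f]_{β,Ω}` of the Hessian of `f` over `Ω`, in `[0,∞]`. -/
def hessHolder {d : ℕ} (β : ℝ) (f : EuclideanSpace ℝ (Fin d) → ℝ)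
    (Ω : Set (EuclideanSpace ℝ (Fin d))) : ℝ≥0∞ :=
  ⨆ (y : Ω) (z : Ω) (_ : (y : EuclideanSpace ℝ (Fin d)) ≠ (z : EuclideanSpace ℝ (Fin d))),
    ENNReal.ofReal
      (‖iteratedFDeriv ℝ 2 f (y : EuclideanSpace ℝ (Fin d)) -
          iteratedFDeriv ℝ 2 f (z : EuclideanSpace ℝ (Fin d))‖ /
        ‖(y : EuclideanSpace ℝ (Fin d)) - (z : EuclideanSpace ℝ (Fin d))‖ ^ β)

open Filter Topology

section Taylor

variable {E F : Type*} [NormedAddCommGroup E] [NormedSpace ℝ E]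
  [NormedAddCommGroup F] [NormedSpace ℝ F]

lemma iteratedDeriv_comp_add_smul {f : E → F} {n : WithTop ℕ∞} (hf : ContDiff ℝ n f) {i : ℕ}
    (hi : i ≤ n) (x v : E) (s : ℝ) :
    iteratedDeriv i (fun s : ℝ => f (x + s • v)) s =
      iteratedFDeriv ℝ i f (x + s • v) fun _ => v := by
  have hline : (fun s : ℝ => f (x + s • v)) =
      (fun y => f (x + y)) ∘ ContinuousLinearMap.smulRight (1 : ℝ →L[ℝ] ℝ) v := by
    ext s; simp
  have hshift : ContDiff ℝ n fun y => f (x + y) := hf.comp (contDiff_const.add contDiff_id)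
  rw [iteratedDeriv_eq_iteratedFDeriv, hline,
    ContinuousLinearMap.iteratedFDeriv_comp_right _ hshift _ hi]
  simp [iteratedFDeriv_comp_add_left]

lemma abs_sub_taylor_two_le {f : E → ℝ} (hf : ContDiff ℝ 2 f) {x v : E} {M : ℝ}
    (hM : ∀ s ∈ Set.Icc (0 : ℝ) 1,
      ‖iteratedFDeriv ℝ 2 f (x + s • v) - iteratedFDeriv ℝ 2 f x‖ ≤ M) :
    |f (x + v) - (f x + fderiv ℝ f x v + iteratedFDeriv ℝ 2 f x (fun _ => v) / 2)| ≤
      M * ‖v‖ ^ 2 / 2 := by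
  have hg : ContDiff ℝ 2 fun s : ℝ => f (x + s • v) :=
    hf.comp (contDiff_const.add (contDiff_id.smul contDiff_const))
  obtain ⟨c, hc, hTaylor⟩ := taylor_mean_remainder_lagrange_iteratedDeriv (n := 1)
    (zero_ne_one' ℝ) (by norm_num; exact hg.contDiffOn)
  rw [Set.uIoo_of_le zero_le_one] at hc
  have hD1 : taylorWithinEval (fun s : ℝ => f (x + s • v)) 1 (Set.uIcc 0 1) 0 1 =
      f x + fderiv ℝ f x v := by
    rw [Set.uIcc_of_le zero_le_one, taylorWithinEval_succ, taylor_within_zero_eval, zero_add,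
      iteratedDerivWithin_eq_iteratedDeriv (uniqueDiffOn_Icc zero_lt_one)
        (hg.of_le (by norm_num)).contDiffAt (Set.left_mem_Icc.2 zero_le_one),
      iteratedDeriv_comp_add_smul hf (by norm_num)]
    simp [iteratedFDeriv_one_apply]
  rw [hD1, iteratedDeriv_comp_add_smul hf le_rfl] at hTaylor
  simp only [one_smul, sub_zero, one_pow, mul_one] at hTaylor
  have hrem : f (x + v) - (f x + fderiv ℝ f x v + iteratedFDeriv ℝ 2 f x (fun _ => v) / 2) =
      (iteratedFDeriv ℝ 2 f (x + c • v) - iteratedFDeriv ℝ 2 f x) (fun _ => v) / 2 := by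
    rw [sub_apply]
    norm_num at hTaylor
    linarith
  rw [hrem, abs_div, abs_two]
  gcongr
  calc |(iteratedFDeriv ℝ 2 f (x + c • v) - iteratedFDeriv ℝ 2 f x) fun _ => v|
      ≤ ‖iteratedFDeriv ℝ 2 f (x + c • v) - iteratedFDeriv ℝ 2 f x‖ * ‖v‖ ^ 2 := by
        rw [← Real.norm_eq_abs]
        exact ContinuousMultilinearMap.le_opNorm_mul_pow_of_le _ (pi_norm_const_le v)
    _ ≤ M * ‖v‖ ^ 2 := by gcongr; exact hM c (Set.Ioo_subset_Icc_self hc)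

end Taylor

lemma apply_eq_sum_smul_apply_single {d : ℕ} {F : Type*} [NormedAddCommGroup F]
    [NormedSpace ℝ F] (L : EuclideanSpace ℝ (Fin d) →L[ℝ] F) (w : EuclideanSpace ℝ (Fin d)) :
    L w = ∑ i, w i • L (EuclideanSpace.single i 1) := by
  conv_lhs => rw [← (EuclideanSpace.basisFun (Fin d) ℝ).sum_repr w]
  simp [map_sum, map_smul]

lemma iteratedFDeriv_two_apply_const_eq_sum {d : ℕ} (f : EuclideanSpace ℝ (Fin d) → ℝ)
    (z w : EuclideanSpace ℝ (Fin d)) :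
    iteratedFDeriv ℝ 2 f z (fun _ => w) = ∑ i, ∑ k, w i * w k * hessianEntry f z i k := by
  simp only [hessianEntry, iteratedFDeriv_two_apply]
  rw [apply_eq_sum_smul_apply_single (fderiv ℝ (fderiv ℝ f) z) w, sum_apply]
  refine Finset.sum_congr rfl fun i _ => ?_
  rw [smul_apply, apply_eq_sum_smul_apply_single (fderiv ℝ (fderiv ℝ f) z _) w,
    smul_eq_mul, Finset.mul_sum]
  simp [mul_assoc]

/-- The Taylored generator `m · Df(z) + ½ tr(s D²f(z))` for drift `m` and diffusion matrix `s`. -/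
def taylorGenerator {d : ℕ} (f : EuclideanSpace ℝ (Fin d) → ℝ) (m : EuclideanSpace ℝ (Fin d))
    (s : Matrix (Fin d) (Fin d) ℝ) (z : EuclideanSpace ℝ (Fin d)) : ℝ :=
  fderiv ℝ f z m + 1 / 2 * ∑ i, ∑ k, s i k * hessianEntry f z i k

lemma norm_iteratedFDeriv_two_sub_le_of_hessHolder_ne_top {d : ℕ} {β : ℝ}
    {f : EuclideanSpace ℝ (Fin d) → ℝ} {Ω : Set (EuclideanSpace ℝ (Fin d))}
    (hfin : hessHolder β f Ω ≠ ⊤) {a b : EuclideanSpace ℝ (Fin d)} (ha : a ∈ Ω) (hb : b ∈ Ω) :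
    ‖iteratedFDeriv ℝ 2 f a - iteratedFDeriv ℝ 2 f b‖ ≤
      (hessHolder β f Ω).toReal * ‖a - b‖ ^ β := by
  rcases eq_or_ne a b with rfl | hab
  · rw [sub_self, norm_zero, sub_self, norm_zero]
    positivity
  have hpos : 0 < ‖a - b‖ ^ β := Real.rpow_pos_of_pos (norm_pos_iff.2 (sub_ne_zero.2 hab)) β
  rw [← div_le_iff₀ hpos]
  refine (ENNReal.ofReal_le_iff_le_toReal hfin).1 ?_
  unfold hessHolder
  exact le_iSup_of_le ⟨a, ha⟩ (le_iSup_of_le ⟨b, hb⟩ (le_iSup_of_le hab le_rfl))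

lemma finite_setOf_norm_zToR_sub_le {d : ℕ} (x : Zd d) (R : ℝ) :
    {y : Zd d | ‖zToR y - zToR x‖ ≤ R}.Finite := by
  refine (Set.finite_Icc (x - fun _ => ⌈R⌉) (x + fun _ => ⌈R⌉)).subset fun y hy => ?_
  have hcoord : ∀ i, |y i - x i| ≤ ⌈R⌉ := fun i => by
    have h : |((y i - x i : ℤ) : ℝ)| ≤ R := by
      simpa [zToR] using (PiLp.norm_apply_le (zToR y - zToR x) i).trans hy
    exact_mod_cast h.trans (Int.le_ceil R)
  constructor <;> intro i <;> have := abs_le.1 (hcoord i) <;>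
    simp only [Pi.sub_apply, Pi.add_apply] <;> omega

lemma summable_mul_of_ne_zero_imp_norm_le {d : ℕ} {p : Zd d → ℝ} {x : Zd d} {R : ℝ}
    (hp : ∀ y, p y ≠ 0 → ‖zToR y - zToR x‖ ≤ R) (f : Zd d → ℝ) :
    Summable fun y => p y * f y :=
  summable_of_hasFiniteSupport <|
    (finite_setOf_norm_zToR_sub_le x R).subset fun y hy => hp y (left_ne_zero_of_mul hy)

lemma tsum_mstep_zero_mul {d : ℕ} (Q : Zd d → Zd d → ℝ) (x : Zd d) (f : Zd d → ℝ) :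
    ∑' y, mstep Q 0 x y * f y = f x := by
  simp [mstep]

lemma abs_tsum_mul_le_of_hasSum_one {ι : Type*} {p g : ι → ℝ} (hp0 : ∀ i, 0 ≤ p i)
    (hp1 : HasSum p 1) (hpg : Summable fun i => p i * g i) {B : ℝ}
    (hB : ∀ i, p i ≠ 0 → |g i| ≤ B) : |∑' i, p i * g i| ≤ B := by
  have hterm : ∀ i, |p i * g i| ≤ p i * B := fun i => by
    rw [abs_mul, abs_of_nonneg (hp0 i)]
    by_cases hi : p i = 0
    · simp [hi]
    · exact mul_le_mul_of_nonneg_left (hB i hi) (hp0 i)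
  calc |∑' i, p i * g i| ≤ ∑' i, |p i * g i| := by
        simpa only [Real.norm_eq_abs] using norm_tsum_le_tsum_norm hpg.norm
    _ ≤ ∑' i, p i * B := hpg.abs.tsum_le_tsum hterm (hp1.summable.mul_right B)
    _ = B := by rw [tsum_mul_right, hp1.tsum_eq, one_mul]

/-- `E_x[∑_t α^t H(X_t)]` in `[0, ∞]`, for the chain with transition matrix `Q`. -/
def discountedChainSum {d : ℕ} (Q : Zd d → Zd d → ℝ) (α : ℝ) (x : Zd d)
    (H : Zd d → ℝ≥0∞) : ℝ≥0∞ :=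
  ∑' t : ℕ, ENNReal.ofReal (α ^ t) * ∑' y, ENNReal.ofReal (mstep Q t x y) * H y

lemma discountedChainSum_mono {d : ℕ} (Q : Zd d → Zd d → ℝ) (α : ℝ) (x : Zd d)
    {H H' : Zd d → ℝ≥0∞} (h : ∀ y, H y ≤ H' y) :
    discountedChainSum Q α x H ≤ discountedChainSum Q α x H' := by
  unfold discountedChainSum
  gcongr with t y
  exact h y

lemma discountedChainSum_const_mul {d : ℕ} (Q : Zd d → Zd d → ℝ) (α : ℝ) (x : Zd d)
    (c : ℝ≥0∞) (H : Zd d → ℝ≥0∞) :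
    discountedChainSum Q α x (fun y => c * H y) = c * discountedChainSum Q α x H := by
  simp only [discountedChainSum, ← ENNReal.tsum_mul_left]
  exact tsum_congr fun t => tsum_congr fun y => by ring

structure IsJumpBoundedStochastic {d : ℕ} (Q : Zd d → Zd d → ℝ) (j : ℝ) : Prop where
  nonneg : ∀ x y, 0 ≤ Q x y
  hasSum_one : ∀ x, HasSum (Q x) 1
  eq_zero_of_lt_norm : ∀ x y, j < ‖zToR y - zToR x‖ → Q x y = 0

namespace IsJumpBoundedStochastic

variable {d : ℕ} {Q : Zd d → Zd d → ℝ} {j : ℝ}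

lemma norm_le_of_ne_zero (hQ : IsJumpBoundedStochastic Q j) {x y : Zd d} (h : Q x y ≠ 0) :
    ‖zToR y - zToR x‖ ≤ j :=
  not_lt.1 fun hlt => h (hQ.eq_zero_of_lt_norm x y hlt)

lemma norm_le_succ_mul (hQ : IsJumpBoundedStochastic Q j) {t : ℕ} {x y z : Zd d}
    (hz : ‖zToR z - zToR x‖ ≤ t * j) (h : Q z y ≠ 0) : ‖zToR y - zToR x‖ ≤ (t + 1 : ℕ) * j :=
  calc ‖zToR y - zToR x‖ ≤ ‖zToR y - zToR z‖ + ‖zToR z - zToR x‖ :=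
        norm_sub_le_norm_sub_add_norm_sub _ _ _
    _ ≤ j + t * j := add_le_add (hQ.norm_le_of_ne_zero h) hz
    _ = (t + 1 : ℕ) * j := by push_cast; ring

lemma summable_mul (hQ : IsJumpBoundedStochastic Q j) (x : Zd d) (f : Zd d → ℝ) :
    Summable fun y => Q x y * f y :=
  summable_mul_of_ne_zero_imp_norm_le (fun _ => hQ.norm_le_of_ne_zero) f

lemma mstep_nonneg (hQ : IsJumpBoundedStochastic Q j) (t : ℕ) (x y : Zd d) :
    0 ≤ mstep Q t x y := by
  induction t generalizing y with
  | zero => simp only [mstep]; split_ifs <;> norm_num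
  | succ t ih => exact tsum_nonneg fun z => mul_nonneg (ih z) (hQ.nonneg z y)

lemma norm_le_of_mstep_ne_zero (hQ : IsJumpBoundedStochastic Q j) {t : ℕ} {x y : Zd d}
    (h : mstep Q t x y ≠ 0) : ‖zToR y - zToR x‖ ≤ t * j := by
  induction t generalizing y with
  | zero =>
    obtain rfl : y = x := by by_contra hne; simp [mstep, hne] at h
    simp
  | succ t ih =>
    obtain ⟨z, hz⟩ : ∃ z, mstep Q t x z * Q z y ≠ 0 := by
      by_contra! hzero; simp [mstep, hzero] at h
    exact hQ.norm_le_succ_mul (ih (left_ne_zero_of_mul hz)) (right_ne_zero_of_mul hz)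

lemma summable_mstep_mul (hQ : IsJumpBoundedStochastic Q j) (t : ℕ) (x : Zd d)
    (f : Zd d → ℝ) : Summable fun y => mstep Q t x y * f y :=
  summable_mul_of_ne_zero_imp_norm_le (fun _ => hQ.norm_le_of_mstep_ne_zero) f

/-- The Chapman–Kolmogorov equation, tested against `f`. -/
lemma tsum_mstep_succ_mul (hQ : IsJumpBoundedStochastic Q j) (t : ℕ) (x : Zd d)
    (f : Zd d → ℝ) :
    ∑' y, mstep Q (t + 1) x y * f y = ∑' z, mstep Q t x z * ∑' y, Q z y * f y := by
  have hfin : Summable (Function.uncurry fun y z => mstep Q t x z * Q z y * f y) := by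
    refine summable_of_hasFiniteSupport <|
      ((finite_setOf_norm_zToR_sub_le x ((t + 1 : ℕ) * j)).prod
        (finite_setOf_norm_zToR_sub_le x (t * j))).subset fun ⟨y, z⟩ hyz => ?_
    have hm := left_ne_zero_of_mul (left_ne_zero_of_mul hyz)
    have hq := right_ne_zero_of_mul (left_ne_zero_of_mul hyz)
    exact ⟨hQ.norm_le_succ_mul (hQ.norm_le_of_mstep_ne_zero hm) hq,
      hQ.norm_le_of_mstep_ne_zero hm⟩
  simp only [mstep, ← tsum_mul_right, ← tsum_mul_left, ← mul_assoc]
  exact hfin.tsum_comm.symm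

lemma hasSum_mstep (hQ : IsJumpBoundedStochastic Q j) (t : ℕ) (x : Zd d) :
    HasSum (mstep Q t x) 1 := by
  refine (by simpa using hQ.summable_mstep_mul t x 1 : Summable _).hasSum_iff.2 ?_
  induction t with
  | zero => simpa using tsum_mstep_zero_mul Q x 1
  | succ t ih =>
    simpa [(hQ.hasSum_one _).tsum_eq, ih] using hQ.tsum_mstep_succ_mul t x 1

lemma le_pow_mul_tsum_mstep_add_sum (hQ : IsJumpBoundedStochastic Q j) {α : ℝ} (hα : 0 ≤ α)
    {D e : Zd d → ℝ} (hrec : ∀ z, D z ≤ α * ∑' y, Q z y * D y + e z) (x : Zd d) (T : ℕ) :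
    D x ≤ α ^ T * ∑' y, mstep Q T x y * D y +
      ∑ t ∈ Finset.range T, α ^ t * ∑' y, mstep Q t x y * e y := by
  induction T with
  | zero => simp [tsum_mstep_zero_mul]
  | succ T ih =>
    have hstep : ∑' y, mstep Q T x y * D y ≤
        α * ∑' y, mstep Q (T + 1) x y * D y + ∑' y, mstep Q T x y * e y :=
      calc ∑' y, mstep Q T x y * D y
          ≤ ∑' y, (α * (mstep Q T x y * ∑' w, Q y w * D w) + mstep Q T x y * e y) :=
            (hQ.summable_mstep_mul T x D).tsum_le_tsum
              (fun y => by nlinarith [hrec y, hQ.mstep_nonneg T x y])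
              ((hQ.summable_mstep_mul T x _).mul_left α |>.add (hQ.summable_mstep_mul T x e))
        _ = α * ∑' y, mstep Q (T + 1) x y * D y + ∑' y, mstep Q T x y * e y := by
          rw [((hQ.summable_mstep_mul T x _).mul_left α).tsum_add (hQ.summable_mstep_mul T x e),
            tsum_mul_left, hQ.tsum_mstep_succ_mul]
    rw [Finset.sum_range_succ, pow_succ]
    nlinarith [mul_le_mul_of_nonneg_left hstep (pow_nonneg hα T)]

lemma eq_pow_mul_tsum_mstep_add_sum (hQ : IsJumpBoundedStochastic Q j) {α : ℝ} (hα : 0 ≤ α)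
    {D e : Zd d → ℝ} (hrec : ∀ z, D z = α * ∑' y, Q z y * D y + e z) (x : Zd d) (T : ℕ) :
    D x = α ^ T * ∑' y, mstep Q T x y * D y +
      ∑ t ∈ Finset.range T, α ^ t * ∑' y, mstep Q t x y * e y := by
  refine le_antisymm (hQ.le_pow_mul_tsum_mstep_add_sum hα (fun z => (hrec z).le) x T) ?_
  have hneg := hQ.le_pow_mul_tsum_mstep_add_sum hα (D := fun z => -D z) (e := fun z => -e z)
    (fun z => by simp only [mul_neg, tsum_neg]; linarith [hrec z]) x T
  simp only [mul_neg, tsum_neg, Finset.sum_neg_distrib] at hneg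
  linarith

lemma abs_tsum_mstep_mul_le_tsum_abs (hQ : IsJumpBoundedStochastic Q j) (t : ℕ) (x : Zd d)
    (g : Zd d → ℝ) : |∑' y, mstep Q t x y * g y| ≤ ∑' y, mstep Q t x y * |g y| := by
  simpa only [Real.norm_eq_abs, abs_mul, abs_of_nonneg (hQ.mstep_nonneg t x _)] using
    norm_tsum_le_tsum_norm (hQ.summable_mstep_mul t x g).norm

lemma tendsto_pow_mul_tsum_mstep_mul (hQ : IsJumpBoundedStochastic Q j) {α : ℝ} (hα0 : 0 ≤ α)
    (hα1 : α < 1) {g : Zd d → ℝ} {C : ℝ} {q : ℕ}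
    (hg : ∀ z, |g z| ≤ C * (1 + ‖zToR z‖ ^ q)) (x : Zd d) :
    Tendsto (fun T : ℕ => α ^ T * ∑' y, mstep Q T x y * g y) atTop (𝓝 0) := by
  set c := ‖zToR x‖
  have hC : 0 ≤ C := nonneg_of_mul_nonneg_left ((abs_nonneg _).trans (hg x)) (by positivity)
  have hbound : ∀ᶠ T : ℕ in atTop,
      ‖α ^ T * ∑' y, mstep Q T x y * g y‖ ≤ C * (1 + (c + j) ^ q) * ((T : ℝ) ^ q * α ^ T) := by
    filter_upwards [eventually_ge_atTop 1] with T hT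
    have hT' : (1 : ℝ) ≤ T := by exact_mod_cast hT
    have hE : |∑' y, mstep Q T x y * g y| ≤ C * (1 + (c + j) ^ q) * (T : ℝ) ^ q := by
      refine abs_tsum_mul_le_of_hasSum_one (hQ.mstep_nonneg T x) (hQ.hasSum_mstep T x)
        (hQ.summable_mstep_mul T x g) fun y hy => (hg y).trans ?_
      replace hy := hQ.norm_le_of_mstep_ne_zero hy
      have hy' : ‖zToR y‖ ≤ (c + j) * T := by
        nlinarith [norm_sub_norm_le (zToR y) (zToR x), norm_nonneg (zToR x)]
      have := pow_le_pow_left₀ (norm_nonneg _) hy' q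
      have := one_le_pow₀ (n := q) hT'
      rw [mul_pow] at *
      nlinarith
    rw [Real.norm_eq_abs, abs_mul, abs_of_nonneg (pow_nonneg hα0 T)]
    nlinarith [pow_nonneg hα0 T]
  refine squeeze_zero_norm' hbound ?_
  simpa using (tendsto_pow_const_mul_const_pow_of_lt_one q hα0 hα1).const_mul
    (C * (1 + (c + j) ^ q))

lemma ofReal_abs_sum_range_le_discountedChainSum (hQ : IsJumpBoundedStochastic Q j) {α c : ℝ}
    (hα : 0 ≤ α) (hc : 0 ≤ c) {g : Zd d → ℝ} {H : Zd d → ℝ≥0∞}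
    (hg : ∀ y, ENNReal.ofReal |g y| ≤ H y)
    (x : Zd d) (T : ℕ) :
    ENNReal.ofReal |∑ t ∈ Finset.range T, α ^ t * ∑' y, mstep Q t x y * (c * g y)| ≤
      ENNReal.ofReal c * discountedChainSum Q α x H := by
  have hnonneg : ∀ t, 0 ≤ α ^ t * ∑' y, mstep Q t x y * |c * g y| := fun t =>
    mul_nonneg (pow_nonneg hα t) (tsum_nonneg fun y => mul_nonneg (hQ.mstep_nonneg t x y)
      (abs_nonneg _))
  calc ENNReal.ofReal |∑ t ∈ Finset.range T, α ^ t * ∑' y, mstep Q t x y * (c * g y)|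
      ≤ ENNReal.ofReal (∑ t ∈ Finset.range T, α ^ t * ∑' y, mstep Q t x y * |c * g y|) := by
        refine ENNReal.ofReal_le_ofReal <| (Finset.abs_sum_le_sum_abs _ _).trans <|
          Finset.sum_le_sum fun t _ => ?_
        rw [abs_mul, abs_of_nonneg (pow_nonneg hα t)]
        exact mul_le_mul_of_nonneg_left (hQ.abs_tsum_mstep_mul_le_tsum_abs t x _)
          (pow_nonneg hα t)
    _ = ∑ t ∈ Finset.range T, ENNReal.ofReal (α ^ t) *
          ∑' y, ENNReal.ofReal (mstep Q t x y) * ENNReal.ofReal |c * g y| := by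
        rw [ENNReal.ofReal_sum_of_nonneg fun t _ => hnonneg t]
        refine Finset.sum_congr rfl fun t _ => ?_
        rw [ENNReal.ofReal_mul (pow_nonneg hα t), ENNReal.ofReal_tsum_of_nonneg
          (fun y => mul_nonneg (hQ.mstep_nonneg t x y) (abs_nonneg _))
          (hQ.summable_mstep_mul t x _)]
        simp only [ENNReal.ofReal_mul (hQ.mstep_nonneg t x _)]
    _ ≤ discountedChainSum Q α x fun y => ENNReal.ofReal |c * g y| := ENNReal.sum_le_tsum _
    _ ≤ ENNReal.ofReal c * discountedChainSum Q α x H := by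
        rw [← discountedChainSum_const_mul]
        refine discountedChainSum_mono Q α x fun y => ?_
        rw [abs_mul, abs_of_nonneg hc, ENNReal.ofReal_mul hc]
        gcongr
        exact hg y

theorem ofReal_sub_le_discountedChainSum (hQ : IsJumpBoundedStochastic Q j) {α : ℝ}
    (hα0 : 0 ≤ α) (hα1 : α < 1) {A B ρ a b : Zd d → ℝ} {CA CB : ℝ} {q : ℕ}
    (hA_growth : ∀ z, |A z| ≤ CA * (1 + ‖zToR z‖ ^ q))
    (hB_growth : ∀ z, |B z| ≤ CB * (1 + ‖zToR z‖ ^ q))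
    (hA : ∀ z, A z ≤ ρ z + α * (∑' y, Q z y * A y - a z))
    (hB : ∀ z, ρ z + α * (∑' y, Q z y * B y - b z) ≤ B z)
    {H : Zd d → ℝ≥0∞} (hab : ∀ z, ENNReal.ofReal |a z - b z| ≤ H z) (x : Zd d) :
    ENNReal.ofReal (A x - B x) ≤ ENNReal.ofReal α * discountedChainSum Q α x H := by
  have hrec : ∀ z, A z - B z ≤ α * ∑' y, Q z y * (A y - B y) + α * (b z - a z) := fun z => by
    rw [show (fun y => Q z y * (A y - B y)) = fun y => Q z y * A y - Q z y * B y by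
      simp only [mul_sub], (hQ.summable_mul z A).tsum_sub (hQ.summable_mul z B)]
    linarith [hA z, hB z]
  have hgrowth : ∀ z, |A z - B z| ≤ (CA + CB) * (1 + ‖zToR z‖ ^ q) := fun z =>
    (abs_sub _ _).trans (by linarith [hA_growth z, hB_growth z])
  have hbound : ∀ T : ℕ, ENNReal.ofReal (A x - B x) ≤
      ENNReal.ofReal (α ^ T * ∑' y, mstep Q T x y * (A y - B y)) +
        ENNReal.ofReal α * discountedChainSum Q α x H := fun T =>
    (ENNReal.ofReal_le_ofReal (hQ.le_pow_mul_tsum_mstep_add_sum hα0 hrec x T)).trans <|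
      ENNReal.ofReal_add_le.trans <| add_le_add le_rfl <| (ENNReal.ofReal_le_ofReal
        (le_abs_self _)).trans (hQ.ofReal_abs_sum_range_le_discountedChainSum hα0 hα0
          (fun z => abs_sub_comm (b z) (a z) ▸ hab z) x T)
  refine ge_of_tendsto (x := atTop) ?_ (Eventually.of_forall hbound)
  simpa using ((ENNReal.continuous_ofReal.tendsto 0).comp
    (hQ.tendsto_pow_mul_tsum_mstep_mul hα0 hα1 hgrowth x)).add tendsto_const_nhds

theorem ofReal_abs_tsum_sub_le_discountedChainSum (hQ : IsJumpBoundedStochastic Q j) {α : ℝ}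
    (hα0 : 0 ≤ α) (hα1 : α < 1) {V ρ a : Zd d → ℝ} {C : ℝ} {q : ℕ}
    (hV_growth : ∀ z, |V z| ≤ C * (1 + ‖zToR z‖ ^ q))
    (hV : ∀ z, V z = ρ z + α * (∑' y, Q z y * V y - a z))
    {H : Zd d → ℝ≥0∞} (ha : ∀ z, ENNReal.ofReal |a z| ≤ H z) (x : Zd d)
    (hρ : Summable fun t : ℕ => α ^ t * ∑' y, mstep Q t x y * |ρ y|) :
    ENNReal.ofReal |∑' t : ℕ, α ^ t * ∑' y, mstep Q t x y * ρ y - V x| ≤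
      ENNReal.ofReal α * discountedChainSum Q α x H := by
  have hsplit : ∀ T, ∑ t ∈ Finset.range T, α ^ t * ∑' y, mstep Q t x y * (ρ y - α * a y) =
      ∑ t ∈ Finset.range T, α ^ t * ∑' y, mstep Q t x y * ρ y -
        ∑ t ∈ Finset.range T, α ^ t * ∑' y, mstep Q t x y * (α * a y) := fun T => by
    rw [← Finset.sum_sub_distrib]
    refine Finset.sum_congr rfl fun t _ => ?_
    rw [← mul_sub, ← (hQ.summable_mstep_mul t x ρ).tsum_sub (hQ.summable_mstep_mul t x _)]
    simp only [mul_sub]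
  have hρ' : Summable fun t : ℕ => α ^ t * ∑' y, mstep Q t x y * ρ y :=
    hρ.of_norm_bounded fun t => by
      rw [Real.norm_eq_abs, abs_mul, abs_of_nonneg (pow_nonneg hα0 t)]
      exact mul_le_mul_of_nonneg_left (hQ.abs_tsum_mstep_mul_le_tsum_abs t x ρ) (pow_nonneg hα0 t)
  have hlim : Tendsto (fun T => ∑ t ∈ Finset.range T, α ^ t * ∑' y, mstep Q t x y * (α * a y))
      atTop (𝓝 (0 + ∑' t : ℕ, α ^ t * ∑' y, mstep Q t x y * ρ y - V x)) := by
    refine (((hQ.tendsto_pow_mul_tsum_mstep_mul hα0 hα1 hV_growth x).add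
      hρ'.hasSum.tendsto_sum_nat).sub_const (V x)).congr fun T => ?_
    have := hQ.eq_pow_mul_tsum_mstep_add_sum hα0 (D := V) (e := fun z => ρ z - α * a z)
      (fun z => by rw [hV z]; ring) x T
    rw [hsplit] at this
    linarith
  rw [zero_add] at hlim
  exact le_of_tendsto' ((ENNReal.continuous_ofReal.tendsto _).comp hlim.abs)
    fun T => hQ.ofReal_abs_sum_range_le_discountedChainSum hα0 hα0 ha x T

theorem abs_tsum_mul_sub_taylorGenerator_le (hQ : IsJumpBoundedStochastic Q j)
    {f : EuclideanSpace ℝ (Fin d) → ℝ} (hf : ContDiff ℝ 2 f) {β Hf : ℝ} (hβ : 0 ≤ β)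
    (hHf : 0 ≤ Hf) {x : Zd d} {m : EuclideanSpace ℝ (Fin d)} {s : Matrix (Fin d) (Fin d) ℝ}
    (hm : ∀ i, HasSum (fun y => Q x y * (zToR y - zToR x) i) (m i))
    (hs : ∀ i k, HasSum (fun y => Q x y * ((zToR y - zToR x) i * (zToR y - zToR x) k)) (s i k))
    (hHolder : ∀ a ∈ Metric.closedBall (zToR x) j,
      ‖iteratedFDeriv ℝ 2 f a - iteratedFDeriv ℝ 2 f (zToR x)‖ ≤ Hf * ‖a - zToR x‖ ^ β) :
    |∑' y, Q x y * f (zToR y) - (f (zToR x) + taylorGenerator f m s (zToR x))| ≤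
      Hf * j ^ (2 + β) / 2 := by
  set w : Zd d → EuclideanSpace ℝ (Fin d) := fun y => zToR y - zToR x
  have hL : HasSum (fun y => Q x y * fderiv ℝ f (zToR x) (w y)) (fderiv ℝ f (zToR x) m) := by
    rw [apply_eq_sum_smul_apply_single _ m]
    refine (hasSum_sum fun i (_ : i ∈ Finset.univ) =>
      (hm i).mul_right (fderiv ℝ f (zToR x) (EuclideanSpace.single i 1))).congr_fun fun y => ?_
    rw [apply_eq_sum_smul_apply_single _ (w y), Finset.mul_sum]
    simp only [smul_eq_mul, mul_assoc, w]
  have hB : HasSum (fun y => Q x y * iteratedFDeriv ℝ 2 f (zToR x) (fun _ => w y))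
      (∑ i, ∑ k, s i k * hessianEntry f (zToR x) i k) := by
    refine (hasSum_sum fun i (_ : i ∈ Finset.univ) => hasSum_sum fun k (_ : k ∈ Finset.univ) =>
      (hs i k).mul_right (hessianEntry f (zToR x) i k)).congr_fun fun y => ?_
    rw [iteratedFDeriv_two_apply_const_eq_sum]
    simp only [Finset.mul_sum, mul_assoc, w]
  have hsum : HasSum (fun y => Q x y * (f (zToR y) - (f (zToR x) +
      fderiv ℝ f (zToR x) (w y) + iteratedFDeriv ℝ 2 f (zToR x) (fun _ => w y) / 2)))
      (∑' y, Q x y * f (zToR y) - (f (zToR x) + taylorGenerator f m s (zToR x))) := by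
    have h := (hQ.summable_mul x fun y => f (zToR y)).hasSum.sub
      (((hQ.hasSum_one x).mul_right (f (zToR x))).add (hL.add (hB.div_const 2)))
    rw [one_mul] at h
    rw [show taylorGenerator f m s (zToR x) = fderiv ℝ f (zToR x) m +
      (∑ i, ∑ k, s i k * hessianEntry f (zToR x) i k) / 2 by unfold taylorGenerator; ring]
    exact h.congr_fun fun y => by ring
  rw [← hsum.tsum_eq]
  refine abs_tsum_mul_le_of_hasSum_one (hQ.nonneg x) (hQ.hasSum_one x) hsum.summable
    fun y hy => ?_
  have hwj : ‖w y‖ ≤ j := hQ.norm_le_of_ne_zero hy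
  have hj : 0 ≤ j := (norm_nonneg _).trans hwj
  have hTaylor := abs_sub_taylor_two_le hf (x := zToR x) (v := w y) (M := Hf * j ^ β)
    fun t ht => by
      have hnorm : ‖t • w y‖ ≤ j := by
        rw [norm_smul, Real.norm_of_nonneg ht.1]
        nlinarith [norm_nonneg (w y), ht.2]
      refine (hHolder _ (by simpa [dist_eq_norm] using hnorm)).trans ?_
      gcongr
      simpa using hnorm
  rw [show zToR x + w y = zToR y by simp [w]] at hTaylor
  refine hTaylor.trans ?_
  rw [Real.rpow_add' hj (by linarith), Real.rpow_two]
  have := mul_le_mul_of_nonneg_left (pow_le_pow_left₀ (norm_nonneg _) hwj 2)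
    (mul_nonneg hHf (Real.rpow_nonneg hj β))
  linarith

theorem ofReal_abs_tsum_mul_sub_taylorGenerator_le (hQ : IsJumpBoundedStochastic Q j)
    {f : EuclideanSpace ℝ (Fin d) → ℝ} (hf : ContDiff ℝ 2 f) {β : ℝ} (hβ : 0 ≤ β) (hj : 0 < j)
    {x : Zd d} {m : EuclideanSpace ℝ (Fin d)} {s : Matrix (Fin d) (Fin d) ℝ}
    (hm : ∀ i, HasSum (fun y => Q x y * (zToR y - zToR x) i) (m i))
    (hs : ∀ i k, HasSum (fun y => Q x y * ((zToR y - zToR x) i * (zToR y - zToR x) k)) (s i k)) :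
    ENNReal.ofReal |∑' y, Q x y * f (zToR y) - (f (zToR x) + taylorGenerator f m s (zToR x))| ≤
      ENNReal.ofReal (j ^ (2 + β) / 2) * hessHolder β f (Metric.closedBall (zToR x) j) := by
  by_cases htop : hessHolder β f (Metric.closedBall (zToR x) j) = ⊤
  · rw [htop, ENNReal.mul_top (by simp; positivity)]
    exact le_top
  rw [← ENNReal.ofReal_toReal htop, ← ENNReal.ofReal_mul (by positivity), mul_comm,
    ← mul_div_assoc]
  exact ENNReal.ofReal_le_ofReal <| hQ.abs_tsum_mul_sub_taylorGenerator_le hf hβ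
    ENNReal.toReal_nonneg hm hs fun a ha => norm_iteratedFDeriv_two_sub_le_of_hessHolder_ne_top
      htop ha (Metric.mem_closedBall_self hj.le)

end IsJumpBoundedStochastic

lemma max_ofReal_abs_sub_le {a b c : ℝ} {u v : ℝ≥0∞} (h₁ : ENNReal.ofReal (a - b) ≤ u)
    (h₂ : ENNReal.ofReal (b - a) ≤ v) (h₃ : ENNReal.ofReal |c - a| ≤ u) :
    max (ENNReal.ofReal |a - b|) (ENNReal.ofReal |c - b|) ≤ 2 * u + v := by
  have hab : ENNReal.ofReal |a - b| ≤ u + v := by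
    rcases le_total b a with h | h
    · rw [abs_of_nonneg (sub_nonneg.2 h)]
      exact h₁.trans le_self_add
    · rw [abs_of_nonpos (sub_nonpos.2 h), neg_sub]
      exact h₂.trans le_add_self
  have hu : u ≤ 2 * u := by rw [two_mul]; exact le_add_self
  refine max_le (hab.trans (add_le_add hu le_rfl)) ?_
  calc ENNReal.ofReal |c - b| ≤ ENNReal.ofReal (|c - a| + |a - b|) :=
        ENNReal.ofReal_le_ofReal (abs_sub_le c a b)
    _ ≤ ENNReal.ofReal |c - a| + ENNReal.ofReal |a - b| := ENNReal.ofReal_add_le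
    _ ≤ u + (u + v) := add_le_add h₃ hab
    _ = 2 * u + v := by ring

lemma two_mul_add_le_max_rpow_mul {α β j₁ j₂ : ℝ} (hα0 : 0 ≤ α) (hα1 : α ≤ 1) (hβ : 0 ≤ β)
    (hj₁ : 0 ≤ j₁) (hj₂ : 0 ≤ j₂) (S₁ S₂ : ℝ≥0∞) :
    2 * (ENNReal.ofReal α * (ENNReal.ofReal (j₂ ^ (2 + β) / 2) * S₂)) +
        ENNReal.ofReal α * (ENNReal.ofReal (j₁ ^ (2 + β) / 2) * S₁) ≤
      ENNReal.ofReal (max j₁ j₂ ^ (2 + β)) * (S₂ + S₁) := by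
  have hpow : ∀ {i : ℝ}, 0 ≤ i → i ≤ max j₁ j₂ → α * i ^ (2 + β) ≤ max j₁ j₂ ^ (2 + β) :=
    fun hi hle => (mul_le_of_le_one_left (by positivity) hα1).trans
      (Real.rpow_le_rpow hi hle (by linarith))
  have h₂ : 2 * (ENNReal.ofReal α * ENNReal.ofReal (j₂ ^ (2 + β) / 2)) ≤
      ENNReal.ofReal (max j₁ j₂ ^ (2 + β)) := by
    rw [← ENNReal.ofReal_mul hα0, ← ENNReal.ofReal_ofNat, ← ENNReal.ofReal_mul (by norm_num)]
    exact ENNReal.ofReal_le_ofReal (by linarith [hpow hj₂ (le_max_right j₁ j₂)])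
  have h₁ : ENNReal.ofReal α * ENNReal.ofReal (j₁ ^ (2 + β) / 2) ≤
      ENNReal.ofReal (max j₁ j₂ ^ (2 + β)) := by
    rw [← ENNReal.ofReal_mul hα0]
    refine ENNReal.ofReal_le_ofReal ?_
    have := Real.rpow_nonneg hj₁ (2 + β)
    nlinarith [hpow hj₁ (le_max_left j₁ j₂)]
  calc 2 * (ENNReal.ofReal α * (ENNReal.ofReal (j₂ ^ (2 + β) / 2) * S₂)) +
        ENNReal.ofReal α * (ENNReal.ofReal (j₁ ^ (2 + β) / 2) * S₁)
      = 2 * (ENNReal.ofReal α * ENNReal.ofReal (j₂ ^ (2 + β) / 2)) * S₂ +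
          ENNReal.ofReal α * ENNReal.ofReal (j₁ ^ (2 + β) / 2) * S₁ := by ring
    _ ≤ ENNReal.ofReal (max j₁ j₂ ^ (2 + β)) * S₂ + ENNReal.ofReal (max j₁ j₂ ^ (2 + β)) * S₁ := by
        gcongr
    _ = ENNReal.ofReal (max j₁ j₂ ^ (2 + β)) * (S₂ + S₁) := (mul_add _ _ _).symm

theorem initial_tayloring_bound_optimization_general
    (d : ℕ) (α β j₁ j₂ Γ : ℝ) (q : ℕ)
    (hα0 : 0 < α) (hα1 : α < 1) (hβ0 : 0 < β)
    (hj₁ : 1 ≤ j₁) (hj₂ : 1 ≤ j₂)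
    (A : Type)
    (𝒰 : Zd d → Set A)
    (P : A → Zd d → Zd d → ℝ)
    (hP0 : ∀ x, ∀ u ∈ 𝒰 x, ∀ y, 0 ≤ P u x y)
    (hPsum : ∀ x, ∀ u ∈ 𝒰 x, HasSum (P u x) 1)
    (μ : A → Zd d → EuclideanSpace ℝ (Fin d))
    (σ2 : A → Zd d → Matrix (Fin d) (Fin d) ℝ)
    (hμ : ∀ x, ∀ u ∈ 𝒰 x, ∀ i,
      HasSum (fun y => P u x y * (zToR y - zToR x) i) (μ u x i))
    (hσ2 : ∀ x, ∀ u ∈ 𝒰 x, ∀ i j,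
      HasSum (fun y => P u x y * ((zToR y - zToR x) i * (zToR y - zToR x) j)) (σ2 u x i j))
    (r : Zd d → A → ℝ)
    (Us Uh : Zd d → A)
    (hUs𝒰 : ∀ x, Us x ∈ 𝒰 x) (hUh𝒰 : ∀ x, Uh x ∈ 𝒰 x)
    (hjumpUs : ∀ x y, j₁ < ‖zToR y - zToR x‖ → P (Us x) x y = 0)
    (hjumpUh : ∀ x y, j₂ < ‖zToR y - zToR x‖ → P (Uh x) x y = 0)
    -- (b) the Bellman equation for `Vs` with maximizer `Us`
    (Vs : Zd d → ℝ)
    (hVsbd : ∀ x, |Vs x| ≤ Γ * (1 + ‖zToR x‖ ^ q))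
    (hBellmanLUB : ∀ x,
      IsLUB {v : ℝ | ∃ u ∈ 𝒰 x, v = r x u + α * ∑' y : Zd d, P u x y * Vs y} (Vs x))
    (hBellmanAtt : ∀ x, Vs x = r x (Us x) + α * ∑' y : Zd d, P (Us x) x y * Vs y)
    -- (c) the Taylored equation for `Vh` with maximizer `Uh`
    (Vh : EuclideanSpace ℝ (Fin d) → ℝ)
    (hVhC2 : ContDiff ℝ 2 Vh)
    (hVhbd : ∀ z : EuclideanSpace ℝ (Fin d), |Vh z| ≤ Γ * (1 + ‖z‖ ^ q))
    (hTCPLUB : ∀ x : Zd d,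
      IsLUB {v : ℝ | ∃ u ∈ 𝒰 x, v = r x u + α * (fderiv ℝ Vh (zToR x) (μ u x) +
          (1 / 2) * ∑ i, ∑ j, σ2 u x i j * hessianEntry Vh (zToR x) i j)}
        ((1 - α) * Vh (zToR x)))
    (hTCPAtt : ∀ x : Zd d,
      (1 - α) * Vh (zToR x) = r x (Uh x) + α * (fderiv ℝ Vh (zToR x) (μ (Uh x) x) +
        (1 / 2) * ∑ i, ∑ j, σ2 (Uh x) x i j * hessianEntry Vh (zToR x) i j))
    -- induced stochastic matrices of the two stationary policies
    (QUs QUh : Zd d → Zd d → ℝ)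
    (hQUs : ∀ x y, QUs x y = P (Us x) x y)
    (hQUh : ∀ x y, QUh x y = P (Uh x) x y)
    -- (d) the value of the policy `Uh`, absolutely convergent
    (VUh : Zd d → ℝ)
    (hVUhabs' : ∀ x,
      Summable (fun t : ℕ => α ^ t * ∑' y : Zd d, mstep QUh t x y * |r y (Uh y)|))
    (hVUh : ∀ x, VUh x = ∑' t : ℕ, α ^ t * ∑' y : Zd d, mstep QUh t x y * r y (Uh y))
    (x : Zd d) :
    max (ENNReal.ofReal |Vh (zToR x) - Vs x|) (ENNReal.ofReal |VUh x - Vs x|) ≤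
      ENNReal.ofReal (max j₁ j₂ ^ (2 + β)) *
        ((∑' t : ℕ, ENNReal.ofReal (α ^ t) *
            ∑' y : Zd d, ENNReal.ofReal (mstep QUh t x y) *
              hessHolder β Vh (Metric.closedBall (zToR y) j₂)) +
          ∑' t : ℕ, ENNReal.ofReal (α ^ t) *
            ∑' y : Zd d, ENNReal.ofReal (mstep QUs t x y) *
              hessHolder β Vh (Metric.closedBall (zToR y) j₁)) := by
  obtain rfl : QUs = fun z => P (Us z) z := funext₂ hQUs
  obtain rfl : QUh = fun z => P (Uh z) z := funext₂ hQUh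
  have hQs : IsJumpBoundedStochastic (fun z => P (Us z) z) j₁ :=
    ⟨fun z => hP0 z _ (hUs𝒰 z), fun z => hPsum z _ (hUs𝒰 z), hjumpUs⟩
  have hQh : IsJumpBoundedStochastic (fun z => P (Uh z) z) j₂ :=
    ⟨fun z => hP0 z _ (hUh𝒰 z), fun z => hPsum z _ (hUh𝒰 z), hjumpUh⟩
  set defect : (Zd d → A) → Zd d → ℝ := fun U z => ∑' y, P (U z) z y * Vh (zToR y) -
    (Vh (zToR z) + taylorGenerator Vh (μ (U z) z) (σ2 (U z) z) (zToR z))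
  have hdefect {U : Zd d → A} {j : ℝ} (hQ : IsJumpBoundedStochastic (fun z => P (U z) z) j)
      (hj : 1 ≤ j) (hU : ∀ z, U z ∈ 𝒰 z) (z : Zd d) : ENNReal.ofReal |defect U z| ≤
        ENNReal.ofReal (j ^ (2 + β) / 2) * hessHolder β Vh (Metric.closedBall (zToR z) j) :=
    hQ.ofReal_abs_tsum_mul_sub_taylorGenerator_le hVhC2 hβ0.le (by linarith) (hμ z _ (hU z))
      (hσ2 z _ (hU z))
  have hTaylored z : Vh (zToR z) = r z (Uh z) +
      α * (∑' y, P (Uh z) z y * Vh (zToR y) - defect Uh z) := by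
    simp only [defect, taylorGenerator]; linarith [hTCPAtt z]
  set Sh := discountedChainSum (fun z => P (Uh z) z) α x fun z =>
    ENNReal.ofReal (j₂ ^ (2 + β) / 2) * hessHolder β Vh (Metric.closedBall (zToR z) j₂) with hSh
  set Ss := discountedChainSum (fun z => P (Us z) z) α x fun z =>
    ENNReal.ofReal (j₁ ^ (2 + β) / 2) * hessHolder β Vh (Metric.closedBall (zToR z) j₁) with hSs
  have h₁ : ENNReal.ofReal (Vh (zToR x) - Vs x) ≤ ENNReal.ofReal α * Sh :=
    hQh.ofReal_sub_le_discountedChainSum hα0.le hα1 (fun z => hVhbd _) hVsbd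
      (fun z => (hTaylored z).le) (b := 0)
      (fun z => by simpa using (hBellmanLUB z).1 ⟨Uh z, hUh𝒰 z, rfl⟩)
      (fun z => by simpa using hdefect hQh hj₂ hUh𝒰 z) x
  have h₂ : ENNReal.ofReal (Vs x - Vh (zToR x)) ≤ ENNReal.ofReal α * Ss :=
    hQs.ofReal_sub_le_discountedChainSum hα0.le hα1 hVsbd (fun z => hVhbd _) (a := 0)
      (fun z => by simpa using (hBellmanAtt z).le) (b := defect Us) (fun z => by
        simp only [defect, taylorGenerator]; linarith [(hTCPLUB z).1 ⟨Us z, hUs𝒰 z, rfl⟩])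
      (fun z => by simpa using hdefect hQs hj₁ hUs𝒰 z) x
  have h₃ : ENNReal.ofReal |VUh x - Vh (zToR x)| ≤ ENNReal.ofReal α * Sh := by
    rw [hVUh]
    exact hQh.ofReal_abs_tsum_sub_le_discountedChainSum hα0.le hα1 (fun z => hVhbd _)
      hTaylored (hdefect hQh hj₂ hUh𝒰) x (hVUhabs' x)
  simp only [hSh, hSs, discountedChainSum_const_mul] at h₁ h₂ h₃
  exact (max_ofReal_abs_sub_le h₁ h₂ h₃).trans
    (two_mul_add_le_max_rpow_mul hα0.le hα1.le hβ0.le (by linarith) (by linarith) _ _)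

theorem initial_tayloring_bound_optimization
    (d : ℕ) (hd : 1 ≤ d) (α β j₁ j₂ Γ : ℝ) (q : ℕ)
    (hα0 : 0 < α) (hα1 : α < 1) (hβ0 : 0 < β) (hβ1 : β ≤ 1)
    (hj₁ : 1 ≤ j₁) (hj₂ : 1 ≤ j₂) (hΓ : 0 < Γ)
    (A : Type) [Countable A]
    (𝒰 : Zd d → Set A) (h𝒰 : ∀ x, (𝒰 x).Nonempty)
    (P : A → Zd d → Zd d → ℝ)
    (hP0 : ∀ x, ∀ u ∈ 𝒰 x, ∀ y, 0 ≤ P u x y)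
    (hPsum : ∀ x, ∀ u ∈ 𝒰 x, HasSum (P u x) 1)
    (μ : A → Zd d → EuclideanSpace ℝ (Fin d))
    (σ2 : A → Zd d → Matrix (Fin d) (Fin d) ℝ)
    (hμ : ∀ x, ∀ u ∈ 𝒰 x, ∀ i,
      HasSum (fun y => P u x y * (zToR y - zToR x) i) (μ u x i))
    (hσ2 : ∀ x, ∀ u ∈ 𝒰 x, ∀ i j,
      HasSum (fun y => P u x y * ((zToR y - zToR x) i * (zToR y - zToR x) j)) (σ2 u x i j))
    (r : Zd d → A → ℝ)
    (Us Uh : Zd d → A)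
    (hUs𝒰 : ∀ x, Us x ∈ 𝒰 x) (hUh𝒰 : ∀ x, Uh x ∈ 𝒰 x)
    (hjumpUs : ∀ x y, j₁ < ‖zToR y - zToR x‖ → P (Us x) x y = 0)
    (hjumpUh : ∀ x y, j₂ < ‖zToR y - zToR x‖ → P (Uh x) x y = 0)
    (hrUs : ∀ x, |r x (Us x)| ≤ Γ * (1 + ‖zToR x‖ ^ q))
    (hrUh : ∀ x, |r x (Uh x)| ≤ Γ * (1 + ‖zToR x‖ ^ q))
    -- (b) the Bellman equation for `Vs` with maximizer `Us`
    (Vs : Zd d → ℝ)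
    (hVsbd : ∀ x, |Vs x| ≤ Γ * (1 + ‖zToR x‖ ^ q))
    (hVsabs : ∀ x, ∀ u ∈ 𝒰 x, Summable (fun y => P u x y * |Vs y|))
    (hBellmanLUB : ∀ x,
      IsLUB {v : ℝ | ∃ u ∈ 𝒰 x, v = r x u + α * ∑' y : Zd d, P u x y * Vs y} (Vs x))
    (hBellmanAtt : ∀ x, Vs x = r x (Us x) + α * ∑' y : Zd d, P (Us x) x y * Vs y)
    -- (c) the Taylored equation for `Vh` with maximizer `Uh`
    (Vh : EuclideanSpace ℝ (Fin d) → ℝ)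
    (hVhC2 : ContDiff ℝ 2 Vh)
    (hVhbd : ∀ z : EuclideanSpace ℝ (Fin d), |Vh z| ≤ Γ * (1 + ‖z‖ ^ q))
    (hTCPLUB : ∀ x : Zd d,
      IsLUB {v : ℝ | ∃ u ∈ 𝒰 x, v = r x u + α * (fderiv ℝ Vh (zToR x) (μ u x) +
          (1 / 2) * ∑ i, ∑ j, σ2 u x i j * hessianEntry Vh (zToR x) i j)}
        ((1 - α) * Vh (zToR x)))
    (hTCPAtt : ∀ x : Zd d,
      (1 - α) * Vh (zToR x) = r x (Uh x) + α * (fderiv ℝ Vh (zToR x) (μ (Uh x) x) +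
        (1 / 2) * ∑ i, ∑ j, σ2 (Uh x) x i j * hessianEntry Vh (zToR x) i j))
    -- induced stochastic matrices of the two stationary policies
    (QUs QUh : Zd d → Zd d → ℝ)
    (hQUs : ∀ x y, QUs x y = P (Us x) x y)
    (hQUh : ∀ x y, QUh x y = P (Uh x) x y)
    -- (d) the value of the policy `Uh`, absolutely convergent
    (VUh : Zd d → ℝ)
    (hVUhabs : ∀ x, ∀ t : ℕ, Summable (fun y : Zd d => mstep QUh t x y * |r y (Uh y)|))
    (hVUhabs' : ∀ x,
      Summable (fun t : ℕ => α ^ t * ∑' y : Zd d, mstep QUh t x y * |r y (Uh y)|))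
    (hVUh : ∀ x, VUh x = ∑' t : ℕ, α ^ t * ∑' y : Zd d, mstep QUh t x y * r y (Uh y))
    (x : Zd d) :
    max (ENNReal.ofReal |Vh (zToR x) - Vs x|) (ENNReal.ofReal |VUh x - Vs x|) ≤
      ENNReal.ofReal (max j₁ j₂ ^ (2 + β)) *
        ((∑' t : ℕ, ENNReal.ofReal (α ^ t) *
            ∑' y : Zd d, ENNReal.ofReal (mstep QUh t x y) *
              hessHolder β Vh (Metric.closedBall (zToR y) j₂)) +
          ∑' t : ℕ, ENNReal.ofReal (α ^ t) *
            ∑' y : Zd d, ENNReal.ofReal (mstep QUs t x y) *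
              hessHolder β Vh (Metric.closedBall (zToR y) j₁)) :=
  initial_tayloring_bound_optimization_general d α β j₁ j₂ Γ q hα0 hα1 hβ0 hj₁ hj₂ A 𝒰 P hP0 hPsum μ
    σ2 hμ hσ2 r Us Uh hUs𝒰 hUh𝒰 hjumpUs hjumpUh Vs hVsbd hBellmanLUB hBellmanAtt Vh hVhC2 hVhbd
    hTCPLUB hTCPAtt QUs QUh hQUs hQUh VUh hVUhabs' hVUh x
end
end

section
/- Uniform Tayloring optimality-gap bound: Let d ≥ 1, α ∈ (0,1), β ∈ (0,1], 𝔧 ≥ 1 a real number, and C ≥ 0. Let 𝒰 be a nonempty set, let r : ℤ^d × 𝒰 → ℝ be bounded, and for each u ∈ 𝒰 let P^u be a stochastic matrix on ℤ^d with jumps bounded by 𝔧, with drift μ_u and diffusion matrix σ²_u. Let V* : ℤ^d → ℝ be bounded and satisfy the Bellman equation V*(x) = sup_{u∈𝒰} { r(x,u) + α Σ_y P^u(x,y) V*(y) } for all x ∈ ℤ^d. Let V̂ : ℝ^d → ℝ be twice continuously differentiable and bounded, with global Hölder bound [D²V̂]_{β,ℝ^d} ≤ C, satisfying the Taylored equation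 0 = sup_{u∈𝒰} { r(x,u) + α( μ_u(x)·DV̂(x) + (1/2)·trace(σ²_u(x)·D²V̂(x)) ) } − (1−α)·V̂(x) for every x ∈ ℤ^d. Then sup_{x∈ℤ^d} |V̂(x) − V*(x)| ≤ 𝔧^{2+β} C / (1−α). -/
open scoped ENNReal BigOperators

noncomputable section

/-! The one-step expectation `∑ y, P^u(x,y) V̂(y)` differs from its second-order Taylor
approximation `V̂(x) + μ_u(x)·DV̂(x) + ½ tr(σ²_u(x) D²V̂(x))` by at most `𝔧^{2+β} C`: every jump
has length at most `𝔧`, and along a jump `w` the Taylor remainder is at most `C ‖w‖^{2+β}` by the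
Hölder bound on `D²V̂`. So the Taylored equation makes `V̂` a solution of the discrete Bellman
equation up to `α 𝔧^{2+β} C`, and since a supremum of `α`-weighted expectations is `α`-Lipschitz
in the sup norm, `M := sup |V̂ - V*|` satisfies `M ≤ α (M + 𝔧^{2+β} C)`. -/

open Set

section Taylor
variable {E F : Type*} [NormedAddCommGroup E] [NormedSpace ℝ E]
  [NormedAddCommGroup F] [NormedSpace ℝ F]

theorem norm_taylor_two_sub_le_of_norm_deriv2_sub_le {φ φ' φ'' : ℝ → F} {K : ℝ}
    (hφ : ∀ t, HasDerivAt φ (φ' t) t) (hφ' : ∀ t, HasDerivAt φ' (φ'' t) t)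
    (hK : ∀ t ∈ Icc (0 : ℝ) 1, ‖φ'' t - φ'' 0‖ ≤ K) :
    ‖φ 1 - φ 0 - φ' 0 - (1 / 2 : ℝ) • φ'' 0‖ ≤ K := by
  have hK0 : 0 ≤ K := by simpa using hK 0 (left_mem_Icc.2 zero_le_one)
  have hslope : ∀ t ∈ Icc (0 : ℝ) 1, ‖φ' t - φ' 0 - t • φ'' 0‖ ≤ K := by
    intro t ht
    have h := norm_image_sub_le_of_norm_deriv_le_segment' (f := fun s => φ' s - s • φ'' 0)
      (fun s _ => ((hφ' s).sub ((hasDerivAt_id s).smul_const (φ'' 0))).hasDerivWithinAt)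
      (fun s hs => by simpa using hK s (Ico_subset_Icc_self hs)) t ht
    simp only [zero_smul, sub_zero] at h
    calc ‖φ' t - φ' 0 - t • φ'' 0‖ = ‖φ' t - t • φ'' 0 - φ' 0‖ := by rw [sub_right_comm]
      _ ≤ K * t := h
      _ ≤ K := mul_le_of_le_one_right hK0 ht.2
  have h := norm_image_sub_le_of_norm_deriv_le_segment_01'
    (f := fun s => φ s - s • φ' 0 - (s ^ 2 / 2) • φ'' 0)
    (fun s _ => by
      have := ((hφ s).sub ((hasDerivAt_id s).smul_const (φ' 0))).sub
        (((hasDerivAt_pow 2 s).div_const 2).smul_const (φ'' 0))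
      refine HasDerivAt.hasDerivWithinAt ?_
      convert this using 1
      · rfl
      · norm_num)
    (fun s hs => hslope s (Ico_subset_Icc_self hs))
  convert h using 2
  norm_num
  abel

theorem norm_taylor_two_sub_le_of_holder {f : E → F} (hf : ContDiff ℝ 2 f) {C β : ℝ}
    (hC : 0 ≤ C) (hβ : 0 ≤ β) (x v : E)
    (hH : ∀ y, ‖iteratedFDeriv ℝ 2 f y - iteratedFDeriv ℝ 2 f x‖ ≤ C * ‖y - x‖ ^ β) :
    ‖f (x + v) - f x - fderiv ℝ f x v - (1 / 2 : ℝ) • iteratedFDeriv ℝ 2 f x ![v, v]‖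
      ≤ C * ‖v‖ ^ (2 + β) := by
  have hline : ∀ t : ℝ, HasDerivAt (fun s : ℝ => x + s • v) v t := fun t => by
    simpa using ((hasDerivAt_id t).smul_const v).const_add x
  have hφ : ∀ t : ℝ, HasDerivAt (fun s => f (x + s • v)) (fderiv ℝ f (x + t • v) v) t := fun t =>
    (hf.differentiable two_ne_zero).differentiableAt.hasFDerivAt.comp_hasDerivAt t (hline t)
  have hφ' : ∀ t : ℝ, HasDerivAt (fun s => fderiv ℝ f (x + s • v) v)
      (iteratedFDeriv ℝ 2 f (x + t • v) ![v, v]) t := fun t => by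
    have hDf : ContDiff ℝ 1 (fderiv ℝ f) := hf.fderiv_right (by norm_num)
    simpa [iteratedFDeriv_two_apply] using
      ((hDf.differentiable one_ne_zero _).hasFDerivAt.comp_hasDerivAt t (hline t)).clm_apply
        (hasDerivAt_const t v)
  have hsegment : ∀ t ∈ Icc (0 : ℝ) 1,
      ‖iteratedFDeriv ℝ 2 f (x + t • v) - iteratedFDeriv ℝ 2 f x‖ ≤ C * ‖v‖ ^ β := fun t ht =>
    calc _ ≤ C * ‖t • v‖ ^ β := by simpa using hH (x + t • v)
      _ ≤ C * ‖v‖ ^ β := by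
        gcongr
        rw [norm_smul, Real.norm_of_nonneg ht.1]
        exact mul_le_of_le_one_left (norm_nonneg v) ht.2
  have hK : ∀ t ∈ Icc (0 : ℝ) 1, ‖iteratedFDeriv ℝ 2 f (x + t • v) ![v, v]
      - iteratedFDeriv ℝ 2 f (x + (0 : ℝ) • v) ![v, v]‖ ≤ C * ‖v‖ ^ (2 + β) := fun t ht => by
    rw [zero_smul, add_zero, ← sub_apply]
    calc _ ≤ ‖iteratedFDeriv ℝ 2 f (x + t • v) - iteratedFDeriv ℝ 2 f x‖
          * ∏ i, ‖(![v, v] : Fin 2 → E) i‖ := ContinuousMultilinearMap.le_opNorm _ _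
      _ ≤ C * ‖v‖ ^ β * ‖v‖ ^ 2 := by
        gcongr
        · exact hsegment t ht
        · simp [Fin.prod_univ_two, sq]
      _ = C * ‖v‖ ^ (2 + β) := by
        rw [Real.rpow_add' (norm_nonneg v) (by linarith), Real.rpow_two]
        ring
  simpa using norm_taylor_two_sub_le_of_norm_deriv2_sub_le hφ hφ' hK

end Taylor

section Coordinates
variable {ι : Type*} [Fintype ι] [DecidableEq ι]

theorem ContinuousLinearMap.apply_eq_sum_single {F : Type*} [NormedAddCommGroup F]
    [NormedSpace ℝ F] (L : EuclideanSpace ℝ ι →L[ℝ] F) (w : EuclideanSpace ℝ ι) :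
    L w = ∑ i, w i • L (EuclideanSpace.single i 1) := by
  conv_lhs => rw [← (EuclideanSpace.basisFun ι ℝ).sum_repr w]
  simp

theorem hasSum_mul_apply_of_hasSum_coord {κ : Type*} {p : κ → ℝ} {w : κ → EuclideanSpace ℝ ι}
    {m : EuclideanSpace ℝ ι} (hm : ∀ i, HasSum (fun k => p k * w k i) (m i))
    (L : EuclideanSpace ℝ ι →L[ℝ] ℝ) :
    HasSum (fun k => p k * L (w k)) (L m) := by
  simp_rw [L.apply_eq_sum_single (w _), L.apply_eq_sum_single m, smul_eq_mul, Finset.mul_sum,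
    ← mul_assoc]
  exact hasSum_sum fun i _ => (hm i).mul_right _

end Coordinates

theorem iteratedFDeriv_two_apply_eq_sum_hessianEntry {d : ℕ} (f : EuclideanSpace ℝ (Fin d) → ℝ)
    (x v w : EuclideanSpace ℝ (Fin d)) :
    iteratedFDeriv ℝ 2 f x ![v, w] = ∑ i, ∑ j, v i * w j * hessianEntry f x i j := by
  simp only [hessianEntry, iteratedFDeriv_two_apply, Matrix.cons_val_zero, Matrix.cons_val_one]
  rw [(fderiv ℝ (fderiv ℝ f) x).apply_eq_sum_single v]
  simp_rw [sum_apply, smul_apply, ContinuousLinearMap.apply_eq_sum_single _ w, Finset.smul_sum,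
    smul_eq_mul, mul_assoc]

theorem hasSum_mul_iteratedFDeriv_two {d : ℕ} {κ : Type*} {p : κ → ℝ}
    {w : κ → EuclideanSpace ℝ (Fin d)} {s : Matrix (Fin d) (Fin d) ℝ}
    (hs : ∀ i j, HasSum (fun k => p k * (w k i * w k j)) (s i j))
    (f : EuclideanSpace ℝ (Fin d) → ℝ) (x : EuclideanSpace ℝ (Fin d)) :
    HasSum (fun k => p k * iteratedFDeriv ℝ 2 f x ![w k, w k])
      (∑ i, ∑ j, s i j * hessianEntry f x i j) := by
  simp_rw [iteratedFDeriv_two_apply_eq_sum_hessianEntry, Finset.mul_sum]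
  exact hasSum_sum fun i _ => hasSum_sum fun j _ => by
    simpa only [mul_assoc] using (hs i j).mul_right (hessianEntry f x i j)

section Weights
variable {κ : Type*} {p : κ → ℝ}

theorem abs_mul_le_mul_of_ne_zero_imp {a b K : ℝ} (ha : 0 ≤ a) (h : a ≠ 0 → |b| ≤ K) :
    |a * b| ≤ a * K := by
  rcases eq_or_ne a 0 with rfl | ha'
  · simp
  · rw [abs_mul, abs_of_nonneg ha]
    exact mul_le_mul_of_nonneg_left (h ha') ha

theorem summable_mul_of_abs_le (hp0 : ∀ k, 0 ≤ p k) (hp : Summable p) {g : κ → ℝ} {K : ℝ}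
    (hg : ∀ k, p k ≠ 0 → |g k| ≤ K) : Summable fun k => p k * g k :=
  (hp.mul_right K).of_norm_bounded fun k => abs_mul_le_mul_of_ne_zero_imp (hp0 k) (hg k)

theorem abs_le_of_hasSum_mul (hp0 : ∀ k, 0 ≤ p k) (hp1 : HasSum p 1) {g : κ → ℝ} {s K : ℝ}
    (hs : HasSum (fun k => p k * g k) s) (hg : ∀ k, p k ≠ 0 → |g k| ≤ K) : |s| ≤ K := by
  simpa using hs.norm_le_of_bounded (hp1.mul_right K) fun k =>
    abs_mul_le_mul_of_ne_zero_imp (hp0 k) (hg k)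

end Weights

theorem exists_abs_le_hasSum_mul_eq_taylor {d : ℕ} {f : EuclideanSpace ℝ (Fin d) → ℝ}
    (hf : ContDiff ℝ 2 f) {C β jmp : ℝ} (hC : 0 ≤ C) (hβ : 0 ≤ β) {z₀ : EuclideanSpace ℝ (Fin d)}
    (hH : ∀ y, ‖iteratedFDeriv ℝ 2 f y - iteratedFDeriv ℝ 2 f z₀‖ ≤ C * ‖y - z₀‖ ^ β)
    {κ : Type*} {p : κ → ℝ} (hp0 : ∀ k, 0 ≤ p k) (hp1 : HasSum p 1)
    {z : κ → EuclideanSpace ℝ (Fin d)} (hjump : ∀ k, jmp < ‖z k - z₀‖ → p k = 0)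
    {m : EuclideanSpace ℝ (Fin d)} {s : Matrix (Fin d) (Fin d) ℝ}
    (hm : ∀ i, HasSum (fun k => p k * (z k - z₀) i) (m i))
    (hs : ∀ i j, HasSum (fun k => p k * ((z k - z₀) i * (z k - z₀) j)) (s i j)) :
    ∃ e, |e| ≤ jmp ^ (2 + β) * C ∧ HasSum (fun k => p k * f (z k))
      (f z₀ + (fderiv ℝ f z₀ m + 1 / 2 * ∑ i, ∑ j, s i j * hessianEntry f z₀ i j) + e) := by
  set R : κ → ℝ := fun k => f (z k) - f z₀ - fderiv ℝ f z₀ (z k - z₀)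
    - 1 / 2 * iteratedFDeriv ℝ 2 f z₀ ![z k - z₀, z k - z₀]
  have hR : ∀ k, p k ≠ 0 → |R k| ≤ jmp ^ (2 + β) * C := fun k hk => by
    have hk : ‖z k - z₀‖ ≤ jmp := not_lt.1 fun h => hk (hjump k h)
    have := norm_taylor_two_sub_le_of_holder hf hC hβ z₀ (z k - z₀) hH
    rw [add_sub_cancel, Real.norm_eq_abs, smul_eq_mul] at this
    refine this.trans ?_
    rw [mul_comm]
    gcongr
  have hRsum := (summable_mul_of_abs_le hp0 hp1.summable hR).hasSum
  refine ⟨_, abs_le_of_hasSum_mul hp0 hp1 hRsum hR, ?_⟩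
  have h := ((hp1.mul_right (f z₀)).add ((hasSum_mul_apply_of_hasSum_coord hm (fderiv ℝ f z₀)).add
    ((hasSum_mul_iteratedFDeriv_two hs f z₀).mul_left (1 / 2)))).add hRsum
  rw [one_mul] at h
  exact h.congr_fun fun k => by simp only [R]; ring

theorem abs_ciSup_add_sub_ciSup_le {ι : Type*} [Nonempty ι] {f g : ι → ℝ} {c K : ℝ}
    (hg : BddAbove (range g)) (h : ∀ i, |f i + c - g i| ≤ K) :
    |(⨆ i, f i) + c - ⨆ i, g i| ≤ K := by
  obtain ⟨B, hB⟩ := hg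
  have hf : BddAbove (range f) := ⟨B + K - c, forall_mem_range.2 fun i => by
    linarith [(abs_le.1 (h i)).2, hB (mem_range_self i)]⟩
  rw [abs_le]
  constructor
  · have : (⨆ i, g i) ≤ (⨆ i, f i) + c + K := ciSup_le fun i => by
      linarith [(abs_le.1 (h i)).1, le_ciSup hf i]
    linarith
  · have : (⨆ i, f i) ≤ (⨆ i, g i) - c + K := ciSup_le fun i => by
      linarith [(abs_le.1 (h i)).2, le_ciSup ⟨B, hB⟩ i]
    linarith

theorem abs_sub_le_of_ciSup_eq {A : Type*} [Nonempty A] {r g h : A → ℝ} {α a b K : ℝ}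
    (hα : 0 ≤ α) (ha : 0 = (⨆ u, r u + α * g u) - (1 - α) * a) (hb : b = ⨆ u, r u + α * h u)
    (hbdd : BddAbove (range fun u => r u + α * h u)) (hK : ∀ u, |a + g u - h u| ≤ K) :
    |a - b| ≤ α * K := by
  have := abs_ciSup_add_sub_ciSup_le (c := α * a) hbdd fun u => by
    rw [show r u + α * g u + α * a - (r u + α * h u) = α * (a + g u - h u) by ring, abs_mul,
      abs_of_nonneg hα]
    exact mul_le_mul_of_nonneg_left (hK u) hα
  rwa [← hb, show (⨆ u, r u + α * g u) = (1 - α) * a by linarith, sub_mul, one_mul,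
    sub_add_cancel] at this

theorem le_div_one_sub_of_le_mul_add {α M ε : ℝ} (hα0 : 0 < α) (hα1 : α < 1) (hM : 0 ≤ M)
    (h : M ≤ α * (M + ε)) : M ≤ ε / (1 - α) := by
  have hε : 0 ≤ ε := by
    by_contra! hε
    nlinarith [mul_neg_of_pos_of_neg hα0 hε]
  rw [le_div_iff₀ (sub_pos.2 hα1)]
  nlinarith [mul_nonneg (sub_pos.2 hα1).le hε]

theorem uniform_tayloring_gap_bound_general
    (d : ℕ) (α β jmp C : ℝ)
    (hα0 : 0 < α) (hα1 : α < 1) (hβ0 : 0 < β)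
    (hC : 0 ≤ C)
    (A : Type) [Nonempty A]
    (r : Zd d → A → ℝ) (Cr : ℝ) (hr : ∀ x u, |r x u| ≤ Cr)
    (P : A → Zd d → Zd d → ℝ)
    (hP0 : ∀ u x y, 0 ≤ P u x y)
    (hPsum : ∀ u x, HasSum (P u x) 1)
    (hjump : ∀ u x y, jmp < ‖zToR y - zToR x‖ → P u x y = 0)
    (μ : A → Zd d → EuclideanSpace ℝ (Fin d))
    (σ2 : A → Zd d → Matrix (Fin d) (Fin d) ℝ)
    (hμ : ∀ u x i, HasSum (fun y => P u x y * (zToR y - zToR x) i) (μ u x i))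
    (hσ2 : ∀ u x i j,
      HasSum (fun y => P u x y * ((zToR y - zToR x) i * (zToR y - zToR x) j)) (σ2 u x i j))
    (Vs : Zd d → ℝ) (CV : ℝ) (hVsbd : ∀ x, |Vs x| ≤ CV)
    (hBellman : ∀ x, Vs x = ⨆ u : A, (r x u + α * ∑' y : Zd d, P u x y * Vs y))
    (Vh : EuclideanSpace ℝ (Fin d) → ℝ)
    (hVhC2 : ContDiff ℝ 2 Vh)
    (CVh : ℝ) (hVhbd : ∀ z : EuclideanSpace ℝ (Fin d), |Vh z| ≤ CVh)
    (hHolder : ∀ y z : EuclideanSpace ℝ (Fin d),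
      ‖iteratedFDeriv ℝ 2 Vh y - iteratedFDeriv ℝ 2 Vh z‖ ≤ C * ‖y - z‖ ^ β)
    (hTCP : ∀ x : Zd d,
      0 = (⨆ u : A, (r x u + α * (fderiv ℝ Vh (zToR x) (μ u x) +
            (1 / 2) * ∑ i, ∑ j, σ2 u x i j * hessianEntry Vh (zToR x) i j))) -
        (1 - α) * Vh (zToR x)) :
    ∀ x : Zd d, |Vh (zToR x) - Vs x| ≤ jmp ^ (2 + β) * C / (1 - α) := by
  set ε := jmp ^ (2 + β) * C
  have hgapBdd : BddAbove (range fun x => |Vh (zToR x) - Vs x|) :=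
    ⟨CVh + CV, forall_mem_range.2 fun x => (abs_sub _ _).trans (add_le_add (hVhbd _) (hVsbd x))⟩
  set M := ⨆ x, |Vh (zToR x) - Vs x|
  have hgapM : ∀ x, |Vh (zToR x) - Vs x| ≤ M := le_ciSup hgapBdd
  have hstep : ∀ x, |Vh (zToR x) - Vs x| ≤ α * (M + ε) := fun x => by
    have hPVs : ∀ u, HasSum (fun y => P u x y * Vs y) (∑' y, P u x y * Vs y) := fun u =>
      (summable_mul_of_abs_le (hP0 u x) (hPsum u x).summable fun y _ => hVsbd y).hasSum
    choose e he hPVh using fun u => exists_abs_le_hasSum_mul_eq_taylor hVhC2 hC hβ0.le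
      (fun y => hHolder y (zToR x)) (hP0 u x) (hPsum u x) (hjump u x) (hμ u x) (hσ2 u x)
    refine abs_sub_le_of_ciSup_eq hα0.le (hTCP x) (hBellman x) ⟨Cr + α * CV, ?_⟩ fun u => ?_
    · refine forall_mem_range.2 fun u => add_le_add (abs_le.1 (hr x u)).2 ?_
      exact mul_le_mul_of_nonneg_left (abs_le.1 (abs_le_of_hasSum_mul (hP0 u x) (hPsum u x)
        (hPVs u) fun y _ => hVsbd y)).2 hα0.le
    · have hgap := abs_le_of_hasSum_mul (hP0 u x) (hPsum u x)
        (((hPVh u).sub (hPVs u)).congr_fun fun y => mul_sub _ _ _)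
        fun y _ => hgapM y
      have he := he u
      rw [abs_le] at hgap he ⊢
      constructor <;> linarith
  intro x
  exact (hgapM x).trans <|
    le_div_one_sub_of_le_mul_add hα0 hα1 ((abs_nonneg _).trans (hgapM x)) (ciSup_le hstep)

theorem uniform_tayloring_gap_bound
    (d : ℕ) (hd : 1 ≤ d) (α β jmp C : ℝ)
    (hα0 : 0 < α) (hα1 : α < 1) (hβ0 : 0 < β) (hβ1 : β ≤ 1)
    (hjmp : 1 ≤ jmp) (hC : 0 ≤ C)
    (A : Type) [Nonempty A]
    (r : Zd d → A → ℝ) (Cr : ℝ) (hr : ∀ x u, |r x u| ≤ Cr)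
    (P : A → Zd d → Zd d → ℝ)
    (hP0 : ∀ u x y, 0 ≤ P u x y)
    (hPsum : ∀ u x, HasSum (P u x) 1)
    (hjump : ∀ u x y, jmp < ‖zToR y - zToR x‖ → P u x y = 0)
    (μ : A → Zd d → EuclideanSpace ℝ (Fin d))
    (σ2 : A → Zd d → Matrix (Fin d) (Fin d) ℝ)
    (hμ : ∀ u x i, HasSum (fun y => P u x y * (zToR y - zToR x) i) (μ u x i))
    (hσ2 : ∀ u x i j,
      HasSum (fun y => P u x y * ((zToR y - zToR x) i * (zToR y - zToR x) j)) (σ2 u x i j))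
    (Vs : Zd d → ℝ) (CV : ℝ) (hVsbd : ∀ x, |Vs x| ≤ CV)
    (hBellman : ∀ x, Vs x = ⨆ u : A, (r x u + α * ∑' y : Zd d, P u x y * Vs y))
    (Vh : EuclideanSpace ℝ (Fin d) → ℝ)
    (hVhC2 : ContDiff ℝ 2 Vh)
    (CVh : ℝ) (hVhbd : ∀ z : EuclideanSpace ℝ (Fin d), |Vh z| ≤ CVh)
    (hHolder : ∀ y z : EuclideanSpace ℝ (Fin d),
      ‖iteratedFDeriv ℝ 2 Vh y - iteratedFDeriv ℝ 2 Vh z‖ ≤ C * ‖y - z‖ ^ β)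
    (hTCP : ∀ x : Zd d,
      0 = (⨆ u : A, (r x u + α * (fderiv ℝ Vh (zToR x) (μ u x) +
            (1 / 2) * ∑ i, ∑ j, σ2 u x i j * hessianEntry Vh (zToR x) i j))) -
        (1 - α) * Vh (zToR x)) :
    ∀ x : Zd d, |Vh (zToR x) - Vs x| ≤ jmp ^ (2 + β) * C / (1 - α) :=
  uniform_tayloring_gap_bound_general d α β jmp C hα0 hα1 hβ0 hC A r Cr hr P hP0 hPsum hjump μ σ2 hμ
    hσ2 Vs CV hVsbd hBellman Vh hVhC2 CVh hVhbd hHolder hTCP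
end
end

section
/- Derivative bounds for the heavy-traffic Taylored solution: Let 0 < λ < μ with λ + μ = 1 and α ∈ (0,1), and let γ₋ := (μ−λ) − √((μ−λ)² + 2(1−α)/α), c₁ := −1/((1−α)γ₋), V̂(x) := −α(μ−λ)/(1−α)² + x/(1−α) + c₁·e^{γ₋ x}. Then: (i) for every x ≥ 0, |V̂'''(x)| = (γ₋²/(1−α))·e^{γ₋ x} ≤ γ₋²/(1−α); and (ii) |γ₋| ≤ (1−α)/(α(μ−λ)), hence γ₋²/(1−α)² ≤ 1/(α²(μ−λ)²). -/
/-! Since `γ₋ < 0`, `V̂'''(x) = c₁ γ₋³ e^{γ₋ x} = -(γ₋² / (1 - α)) e^{γ₋ x}` is a decaying exponential,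
so its absolute value is largest at `x = 0`. For the bound on `γ₋`, write `d = μ - λ` and
`k = (1 - α) / α`: then `d² + 2k ≤ (d + k / d)²`, so `|γ₋| = √(d² + 2k) - d ≤ k / d`. -/

open Real

theorem hasDerivAt_const_mul_exp_mul (c γ x : ℝ) :
    HasDerivAt (fun x => c * exp (γ * x)) (c * γ * exp (γ * x)) x := by
  have h := ((hasDerivAt_id x).const_mul γ).exp.const_mul c
  simpa [mul_comm, mul_left_comm, mul_assoc] using h

theorem deriv_const_mul_exp_mul (c γ : ℝ) :
    deriv (fun x => c * exp (γ * x)) = fun x => c * γ * exp (γ * x) :=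
  funext fun x => (hasDerivAt_const_mul_exp_mul c γ x).deriv

theorem deriv_affine_add_const_mul_exp_mul (a b c γ : ℝ) :
    deriv (fun x => a + b * x + c * exp (γ * x)) = fun x => b + c * γ * exp (γ * x) := by
  refine funext fun x => HasDerivAt.deriv ?_
  have h := (((hasDerivAt_id x).const_mul b).const_add a).add (hasDerivAt_const_mul_exp_mul c γ x)
  rwa [mul_one] at h

theorem deriv_deriv_deriv_affine_add_const_mul_exp_mul (a b c γ : ℝ) :
    deriv (deriv (deriv fun x => a + b * x + c * exp (γ * x))) =
      fun x => c * γ ^ 3 * exp (γ * x) := by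
  rw [deriv_affine_add_const_mul_exp_mul, deriv_const_add', deriv_const_mul_exp_mul,
    deriv_const_mul_exp_mul]
  ring_nf

theorem sub_sqrt_sq_add_neg (d : ℝ) {e : ℝ} (he : 0 < e) : d - √(d ^ 2 + e) < 0 := by
  have : d < √(d ^ 2 + e) :=
    (le_abs_self d).trans_lt (by rw [← sqrt_sq_eq_abs]; exact sqrt_lt_sqrt (sq_nonneg d) (by linarith))
  linarith

theorem sqrt_sq_add_two_mul_le {d k : ℝ} (hd : 0 < d) (hk : 0 ≤ k) :
    √(d ^ 2 + 2 * k) ≤ d + k / d := by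
  rw [sqrt_le_left (by positivity)]
  have hsq : (d + k / d) ^ 2 = d ^ 2 + 2 * k + (k / d) ^ 2 := by field_simp; ring
  nlinarith [sq_nonneg (k / d)]

theorem abs_sub_sqrt_sq_add_two_mul_le {d k : ℝ} (hd : 0 < d) (hk : 0 ≤ k) :
    |d - √(d ^ 2 + 2 * k)| ≤ k / d := by
  rw [abs_sub_comm, abs_of_nonneg (by rw [sub_nonneg, le_sqrt hd.le (by positivity)]; linarith)]
  linarith [sqrt_sq_add_two_mul_le hd hk]

theorem sq_div_sq_le_one_div_sq_of_abs_le_div {γ s t : ℝ} (hs : 0 < s) (h : |γ| ≤ s / t) :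
    γ ^ 2 / s ^ 2 ≤ 1 / t ^ 2 := by
  have h' : |γ| / s ≤ 1 / t := by
    calc |γ| / s ≤ s / t / s := by gcongr
      _ = 1 / t := by field_simp
  calc γ ^ 2 / s ^ 2 = (|γ| / s) ^ 2 := by rw [div_pow, sq_abs]
    _ ≤ (1 / t) ^ 2 := by gcongr
    _ = 1 / t ^ 2 := by rw [one_div_pow]

theorem heavy_traffic_derivative_bounds_general
    (lam mu α : ℝ) (hlm : lam < mu)
    (hα0 : 0 < α) (hα1 : α < 1)
    (γ c₁ : ℝ) (Vh : ℝ → ℝ)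
    (hγ : γ = (mu - lam) - Real.sqrt ((mu - lam) ^ 2 + 2 * (1 - α) / α))
    (hc₁ : c₁ = -1 / ((1 - α) * γ))
    (hVh : ∀ x : ℝ, Vh x = -α * (mu - lam) / (1 - α) ^ 2 + x / (1 - α) +
      c₁ * Real.exp (γ * x)) :
    (∀ x : ℝ, 0 ≤ x →
      |deriv (deriv (deriv Vh)) x| = γ ^ 2 / (1 - α) * Real.exp (γ * x) ∧
      γ ^ 2 / (1 - α) * Real.exp (γ * x) ≤ γ ^ 2 / (1 - α)) ∧
    |γ| ≤ (1 - α) / (α * (mu - lam)) ∧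
    γ ^ 2 / (1 - α) ^ 2 ≤ 1 / (α ^ 2 * (mu - lam) ^ 2) := by
  have hd : 0 < mu - lam := sub_pos.mpr hlm
  have h1α : 0 < 1 - α := sub_pos.mpr hα1
  have hγneg : γ < 0 := hγ ▸ sub_sqrt_sq_add_neg _ (by positivity)
  have hVh' : Vh = fun x => -α * (mu - lam) / (1 - α) ^ 2 + (1 - α)⁻¹ * x + c₁ * exp (γ * x) :=
    funext fun x => by rw [hVh, div_eq_inv_mul x]
  have habs : |γ| ≤ (1 - α) / (α * (mu - lam)) := by
    have h := abs_sub_sqrt_sq_add_two_mul_le hd (div_nonneg h1α.le hα0.le)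
    rwa [← mul_div_assoc, ← hγ, div_div] at h
  refine ⟨fun x hx => ⟨?_, ?_⟩, habs, ?_⟩
  · have hcoef : c₁ * γ ^ 3 = -(γ ^ 2 / (1 - α)) := by
      rw [hc₁]; field_simp
    simp only [hVh', deriv_deriv_deriv_affine_add_const_mul_exp_mul, hcoef, neg_mul, abs_neg]
    exact abs_of_nonneg (by positivity)
  · exact mul_le_of_le_one_right (by positivity)
      (exp_le_one_iff.mpr (mul_nonpos_of_nonpos_of_nonneg hγneg.le hx))
  · rw [← mul_pow]
    exact sq_div_sq_le_one_div_sq_of_abs_le_div h1α habs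

theorem heavy_traffic_derivative_bounds
    (lam mu α : ℝ) (hlam : 0 < lam) (hlm : lam < mu) (hsum : lam + mu = 1)
    (hα0 : 0 < α) (hα1 : α < 1)
    (γ c₁ : ℝ) (Vh : ℝ → ℝ)
    (hγ : γ = (mu - lam) - Real.sqrt ((mu - lam) ^ 2 + 2 * (1 - α) / α))
    (hc₁ : c₁ = -1 / ((1 - α) * γ))
    (hVh : ∀ x : ℝ, Vh x = -α * (mu - lam) / (1 - α) ^ 2 + x / (1 - α) +
      c₁ * Real.exp (γ * x)) :
    (∀ x : ℝ, 0 ≤ x →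
      |deriv (deriv (deriv Vh)) x| = γ ^ 2 / (1 - α) * Real.exp (γ * x) ∧
      γ ^ 2 / (1 - α) * Real.exp (γ * x) ≤ γ ^ 2 / (1 - α)) ∧
    |γ| ≤ (1 - α) / (α * (mu - lam)) ∧
    γ ^ 2 / (1 - α) ^ 2 ≤ 1 / (α ^ 2 * (mu - lam) ^ 2) :=
  heavy_traffic_derivative_bounds_general lam mu α hlm hα0 hα1 γ c₁ Vh hγ hc₁ hVh
end
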